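/- Let Γ be a non-trivial finitely generated subgroup of Homeo₊(I), with a fixed finite symmetric generating set, such that every non-identity element of Γ has finitely many fixed points in (0,1), and let f be the biggest generator (ξ ≤ f in the biorder for every generator ξ). Then Γ_f is a normal subgroup of Γ, the quotient Γ/Γ_f is Abelian, and in particular [Γ, Γ] ≤ Γ_f. -/

import Mathlib

/-!
Comparing germs at `0` bi-orders `Γ`: an element with finitely many fixed points has none on
some `(0, δ)`, so by the intermediate value theorem it lies strictly above or strictly below the
identity there. As every generator and its inverse are `≤ f`, every element of `Γ` lies below a
power of `f`. The elements infinitesimal with respect to `f` then form a convex subgroup, normal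
because conjugation moves `f` only by a bounded power of `f`, and the quotient by it is an
Archimedean bi-ordered group, hence abelian by Hölder's theorem.
-/

noncomputable section

/-- The unit interval `[0,1] ⊆ ℝ`. -/
abbrev unitI : Set ℝ := Set.Icc (0:ℝ) 1

/-- Ambient group: bijections of the unit interval. -/
abbrev IntervalMap : Type := Equiv.Perm ↥unitI

/-- The extension of `σ` to `ℝ`, by the identity outside `[0,1]`. -/
def toReal (σ : IntervalMap) : ℝ → ℝ :=
  fun x => if h : x ∈ unitI then (σ ⟨x, h⟩ : ℝ) else x

/-- `σ` is an orientation-preserving homeomorphism of `[0,1]` (a strictly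
increasing bijection of `[0,1]`; such a map automatically fixes `0` and `1`
and is continuous). -/
def IsOPH (σ : IntervalMap) : Prop := StrictMono fun x : ↥unitI => (σ x : ℝ)

/-- `σ` extends to a `C¹` function on `[0,1]`. -/
def IsC1On (σ : IntervalMap) : Prop := ContDiffOn ℝ 1 (toReal σ) unitI

/-- `σ` is an orientation-preserving `C¹` diffeomorphism of `[0,1]`. -/
def IsOPD (σ : IntervalMap) : Prop := IsOPH σ ∧ IsC1On σ ∧ IsC1On σ⁻¹

/-- `Γ` is a subgroup of `Diff₊(I)`. -/
def DiffSubgroup (Γ : Subgroup IntervalMap) : Prop := ∀ γ ∈ Γ, IsOPD γ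

/-- `Γ` is a subgroup of `Homeo₊(I)`. -/
def HomeoSubgroup (Γ : Subgroup IntervalMap) : Prop := ∀ γ ∈ Γ, IsOPH γ

/-- The set of fixed points of `σ` in the open interval `(0,1)`. -/
def FixPts (σ : IntervalMap) : Set ↥unitI :=
  {x : ↥unitI | σ x = x ∧ 0 < (x : ℝ) ∧ (x : ℝ) < 1}

/-- Every non-identity element of `Γ` has finitely many fixed points in `(0,1)`. -/
def FinFix (Γ : Subgroup IntervalMap) : Prop := ∀ γ ∈ Γ, γ ≠ 1 → (FixPts γ).Finite

/-- The `C⁰`-norm `‖σ‖ = sup_{x ∈ [0,1]} |σ(x) - x|`. -/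
def C0norm (σ : IntervalMap) : ℝ := ⨆ x : ↥unitI, |(σ x : ℝ) - (x : ℝ)|

/-- `Γ` is locally transitive. -/
def LocTrans (Γ : Subgroup IntervalMap) : Prop :=
  ∀ p : ↥unitI, 0 < (p : ℝ) → (p : ℝ) < 1 → ∀ ε : ℝ, 0 < ε →
    ∃ γ ∈ Γ, C0norm γ < ε ∧ γ p ≠ p

/-- `Γ` is irreducible: no global fixed point in `(0,1)`. -/
def Irred (Γ : Subgroup IntervalMap) : Prop :=
  ¬ ∃ p : ↥unitI, 0 < (p : ℝ) ∧ (p : ℝ) < 1 ∧ ∀ γ ∈ Γ, γ p = p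

/-- The group `Aff₊(ℝ)` of orientation-preserving affine maps `x ↦ a x + b`,
`a > 0`, as a subgroup of the permutation group of `ℝ`. -/
def AffPlus : Subgroup (Equiv.Perm ℝ) where
  carrier := {e | ∃ a b : ℝ, 0 < a ∧ ∀ x, e x = a * x + b}
  one_mem' := ⟨1, 0, one_pos, fun x => by simp⟩
  mul_mem' := by
    rintro e f ⟨a, b, ha, he⟩ ⟨c, d, hc, hf⟩
    refine ⟨a * c, a * d + b, mul_pos ha hc, fun x => ?_⟩
    rw [Equiv.Perm.mul_apply, hf, he]; ring
  inv_mem' := by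
    rintro e ⟨a, b, ha, he⟩
    refine ⟨a⁻¹, -b / a, by positivity, fun y => ?_⟩
    apply e.injective
    rw [← Equiv.Perm.mul_apply, mul_inv_cancel, Equiv.Perm.one_apply, he]
    field_simp
    ring

/-- `G` embeds into (i.e. is isomorphic to a subgroup of) `Aff₊(ℝ)`. -/
def EmbedsInAff (G : Type*) [Group G] : Prop :=
  ∃ φ : G →* ↥AffPlus, Function.Injective φ

/-- `G` embeds into `Aff₊(ℝ)ⁿ` for some `n ≥ 1`. -/
def EmbedsInAffPow (G : Type*) [Group G] : Prop :=
  ∃ n : ℕ, 1 ≤ n ∧ ∃ φ : G →* (Fin n → ↥AffPlus), Function.Injective φ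

/-- `G` has infinite girth: for every `m` there is a finite generating set `S`
such that no non-trivial reduced word of length at most `m` in `S ∪ S⁻¹`
represents the identity. -/
def HasInfiniteGirth (G : Type*) [Group G] : Prop :=
  ∀ m : ℕ, ∃ S : Finset G, Subgroup.closure (S : Set G) = ⊤ ∧
    ∀ w : FreeGroup {x // x ∈ S}, w ≠ 1 →
      (∃ l : List ({x // x ∈ S} × Bool), l.length ≤ m ∧ FreeGroup.mk l = w) →
      FreeGroup.lift (fun s => (s : G)) w ≠ 1

/-- `a` and `b` generate a free semigroup on two generators: distinct
non-empty positive words in `a, b` give distinct elements. -/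
def FreeSemigroupPair {G : Type*} [Group G] (a b : G) : Prop :=
  Function.Injective
    ⇑(FreeSemigroup.lift (fun x : Bool => if x then a else b) : FreeSemigroup Bool →ₙ* G)

/-- `g < f` in the biorder: `g(x) < f(x)` near `0`. -/
def ltNear (g f : IntervalMap) : Prop :=
  ∃ δ : ℝ, 0 < δ ∧ ∀ x : ↥unitI, 0 < (x : ℝ) → (x : ℝ) < δ → (g x : ℝ) < (f x : ℝ)

/-- `g ≤ f` in the biorder. -/
def leNear (g f : IntervalMap) : Prop := ltNear g f ∨ g = f

/-- `g << f`: `g` is infinitesimal with respect to `f`, i.e. `gⁿ < f` for all `n ∈ ℤ`. -/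
def Infinitesimal (g f : IntervalMap) : Prop := ∀ n : ℤ, ltNear (g ^ n) f

/-- `(f, g)` is a crossed pair on the interval `(a,b)`: `f` fixes `a` and `b`
but no point strictly between them, while `g` maps `a` or `b` into `(a,b)`. -/
def CrossedOn (f g : IntervalMap) (a b : ↥unitI) : Prop :=
  f a = a ∧ f b = b ∧ (∀ x : ↥unitI, (a : ℝ) < x → (x : ℝ) < b → f x ≠ x) ∧
  (((a : ℝ) < (g a : ℝ) ∧ (g a : ℝ) < b) ∨ ((a : ℝ) < (g b : ℝ) ∧ (g b : ℝ) < b))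

/-- `(f, g)` is a crossed pair. -/
def CrossedPair (f g : IntervalMap) : Prop :=
  ∃ a b : ↥unitI, (a : ℝ) < b ∧ (CrossedOn f g a b ∨ CrossedOn g f a b)

/-- The auxiliary point configuration used in weak transitivity:
`extPt γ p 0 = 0`, `extPt γ p j = γ(pⱼ)` for `1 ≤ j ≤ k` (here `pⱼ = p ⟨j-1⟩`
in `0`-indexed notation), and `extPt γ p (k+1) = 1`. -/
def extPt (γ : IntervalMap) {k : ℕ} (p : Fin k → ↥unitI) (j : ℕ) : ℝ :=
  if j = 0 then 0 else if h : j - 1 < k then (γ (p ⟨j - 1, h⟩) : ℝ) else 1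

/-- `Γ` is weakly `k`-transitive. -/
def WeaklyKTrans (Γ : Subgroup IntervalMap) (k : ℕ) : Prop :=
  ∀ g ∈ Γ, ∀ p : Fin k → ↥unitI,
    (∀ i, 0 < (p i : ℝ) ∧ (p i : ℝ) < 1) →
    (StrictMono fun i => (p i : ℝ)) →
    ∀ ε : ℝ, 0 < ε →
      ∃ γ ∈ Γ, extPt γ p k < ε ∧
        ∀ i : Fin k,
          extPt γ p i.val < (g (γ (p i)) : ℝ) ∧
            (g (γ (p i)) : ℝ) < extPt γ p (i.val + 2)

/-- `Γ` is weakly transitive. -/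
def WeakTrans (Γ : Subgroup IntervalMap) : Prop := ∀ k : ℕ, 1 ≤ k → WeaklyKTrans Γ k

open scoped commutatorElement


section Holder

variable {G : Type*} [Group G] [LinearOrder G]

lemma zpow_strictMono_of_one_lt [MulLeftMono G] {a : G} (ha : 1 < a) :
    StrictMono fun n : ℤ => a ^ n :=
  strictMono_int_of_lt_succ fun n => by
    rw [zpow_add_one]
    exact lt_mul_of_one_lt_right' _ ha

variable [MulLeftMono G] [MulRightMono G]

lemma exists_zpow_le_lt (arch : ∀ a : G, 1 < a → ∀ b, ∃ n : ℕ, b ≤ a ^ n) {ε : G} (hε : 1 < ε)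
    (a : G) : ∃ m : ℤ, ε ^ m ≤ a ∧ a < ε ^ (m + 1) := by
  obtain ⟨N, hN⟩ := arch ε hε a
  obtain ⟨M, hM⟩ := arch ε hε a⁻¹
  have hbdd : ∀ m : ℤ, ε ^ m ≤ a → m ≤ N := fun m hm => by
    by_contra! hNm
    exact (hm.trans (by simpa using hN)).not_gt (zpow_strictMono_of_one_lt hε hNm)
  obtain ⟨m, hm, hmax⟩ := Int.exists_greatest_of_bdd ⟨N, hbdd⟩
    ⟨-M, by simpa using inv_le_of_inv_le' hM⟩
  exact ⟨m, hm, lt_of_not_ge fun h => (hmax _ h).not_gt (lt_add_one m)⟩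

lemma exists_one_lt_mul_self_le {u s : G} (hu : 1 < u) (hus : u < s) :
    ∃ ε, 1 < ε ∧ ε * ε ≤ s := by
  by_cases huu : u * u ≤ s
  · exact ⟨u, hu, huu⟩
  · refine ⟨u⁻¹ * s, by simpa using mul_lt_mul_right hus u⁻¹, ?_⟩
    calc u⁻¹ * s * (u⁻¹ * s) ≤ u * (u⁻¹ * s) := by
          refine mul_le_mul_left ?_ _
          simpa using mul_le_mul_right (not_le.mp huu).le u⁻¹
      _ = s := by group

/-- If `ba < ab`, take `ε > 1` with `ε² ≤ (ba)⁻¹ab` and trap `a` and `b` between consecutive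
powers of `ε`: then `ab < ε^(p+m) ε² ≤ ba ε²`, a contradiction. -/
lemma mul_le_mul_swap_of_forall_exists_mul_self_le
    (arch : ∀ a : G, 1 < a → ∀ b, ∃ n : ℕ, b ≤ a ^ n)
    (hdense : ∀ s : G, 1 < s → ∃ ε, 1 < ε ∧ ε * ε ≤ s) (a b : G) : a * b ≤ b * a := by
  by_contra! hlt
  obtain ⟨ε, hε, hεs⟩ := hdense ((b * a)⁻¹ * (a * b))
    (by simpa using mul_lt_mul_right hlt (b * a)⁻¹)
  obtain ⟨m, ham, ham'⟩ := exists_zpow_le_lt arch hε a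
  obtain ⟨p, hbp, hbp'⟩ := exists_zpow_le_lt arch hε b
  have := calc a * b < ε ^ (m + 1) * ε ^ (p + 1) := mul_lt_mul_of_lt_of_lt ham' hbp'
    _ = ε ^ (p + m) * (ε * ε) := by
        rw [← zpow_add, ← sq, ← zpow_natCast, ← zpow_add]
        congr 1
        push_cast
        ring
    _ ≤ b * a * ((b * a)⁻¹ * (a * b)) :=
        mul_le_mul' (by rw [zpow_add]; exact mul_le_mul' hbp ham) hεs
    _ = a * b := by group
  exact this.false

lemma mem_zpowers_of_forall_le (arch : ∀ a : G, 1 < a → ∀ b, ∃ n : ℕ, b ≤ a ^ n) {s : G}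
    (hs : 1 < s) (hmin : ∀ u : G, 1 < u → s ≤ u) (g : G) : g ∈ Subgroup.zpowers s := by
  obtain ⟨m, hm, hm'⟩ := exists_zpow_le_lt arch hs g
  have h1 : 1 ≤ (s ^ m)⁻¹ * g := by simpa using mul_le_mul_right hm (s ^ m)⁻¹
  have h2 : (s ^ m)⁻¹ * g < s := by
    simpa [zpow_add_one, ← mul_assoc] using mul_lt_mul_right hm' (s ^ m)⁻¹
  have h3 : (s ^ m)⁻¹ * g = 1 := le_antisymm (not_lt.mp fun h => (hmin _ h).not_gt h2) h1
  exact Subgroup.mem_zpowers_iff.mpr ⟨m, inv_mul_eq_one.mp h3⟩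

/-- Hölder's theorem: either some `s > 1` has nothing strictly between `1` and `s`, and then `s`
generates `G`, or every positive element dominates the square of a positive element. -/
theorem mul_comm_of_archimedean (arch : ∀ a : G, 1 < a → ∀ b, ∃ n : ℕ, b ≤ a ^ n) (a b : G) :
    a * b = b * a := by
  by_cases hdense : ∀ s : G, 1 < s → ∃ u, 1 < u ∧ u < s
  · have hsq : ∀ s : G, 1 < s → ∃ ε, 1 < ε ∧ ε * ε ≤ s := fun s hs => by
      obtain ⟨u, hu, hus⟩ := hdense s hs
      exact exists_one_lt_mul_self_le hu hus
    exact le_antisymm (mul_le_mul_swap_of_forall_exists_mul_self_le arch hsq a b)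
      (mul_le_mul_swap_of_forall_exists_mul_self_le arch hsq b a)
  · push Not at hdense
    obtain ⟨s, hs, hmin⟩ := hdense
    obtain ⟨i, rfl⟩ := mem_zpowers_of_forall_le arch hs hmin a
    obtain ⟨j, rfl⟩ := mem_zpowers_of_forall_le arch hs hmin b
    exact (Commute.refl s).zpow_zpow i j

end Holder

section QuotientOrder

variable {G : Type*} [Group G] [LinearOrder G] {H : Subgroup G}

def QuotientGroup.RepLE (H : Subgroup G) (x y : G ⧸ H) : Prop :=
  ∃ g h : G, (g : G ⧸ H) = x ∧ (h : G ⧸ H) = y ∧ g ≤ h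

lemma QuotientGroup.repLE_mk_iff [MulRightMono G] {g h : G} :
    QuotientGroup.RepLE H g h ↔ ∃ u ∈ H, g ≤ h * u := by
  constructor
  · rintro ⟨g', h', hg, hh, hle⟩
    rw [QuotientGroup.eq] at hg hh
    refine ⟨(h'⁻¹ * h)⁻¹ * (g'⁻¹ * g), H.mul_mem (H.inv_mem hh) hg, ?_⟩
    simpa [mul_assoc] using mul_le_mul_left hle (g'⁻¹ * g)
  · rintro ⟨u, hu, hle⟩
    exact ⟨g, h * u, rfl, by simpa [QuotientGroup.eq] using hu, hle⟩

variable [MulLeftMono G] [MulRightMono G] [hH : Fact (H : Set G).OrdConnected]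

instance : LinearOrder (G ⧸ H) where
  le := QuotientGroup.RepLE H
  le_refl x := QuotientGroup.induction_on x fun g => ⟨g, g, rfl, rfl, le_rfl⟩
  le_trans x y z := QuotientGroup.induction_on x fun g => QuotientGroup.induction_on y fun h =>
    QuotientGroup.induction_on z fun k => by
      simp only [QuotientGroup.repLE_mk_iff]
      rintro ⟨u, hu, hgh⟩ ⟨v, hv, hhk⟩
      exact ⟨v * u, H.mul_mem hv hu,
        hgh.trans (by simpa [mul_assoc] using mul_le_mul_left hhk u)⟩
  le_antisymm x y := QuotientGroup.induction_on x fun g => QuotientGroup.induction_on y fun h => by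
    simp only [QuotientGroup.repLE_mk_iff]
    rintro ⟨u, hu, hgh⟩ ⟨v, hv, hhg⟩
    refine QuotientGroup.eq.mpr (hH.out.out (H.inv_mem hu) hv ⟨?_, ?_⟩)
    · simpa using mul_le_mul_right (mul_le_mul_left hgh u⁻¹) g⁻¹
    · simpa using mul_le_mul_right hhg g⁻¹
  le_total x y := QuotientGroup.induction_on x fun g => QuotientGroup.induction_on y fun h =>
    (le_total g h).imp (fun hgh => ⟨g, h, rfl, rfl, hgh⟩) (fun hhg => ⟨h, g, rfl, rfl, hhg⟩)
  toDecidableLE := Classical.decRel _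

lemma QuotientGroup.mk_le_mk_iff {g h : G} : (g : G ⧸ H) ≤ h ↔ ∃ u ∈ H, g ≤ h * u :=
  QuotientGroup.repLE_mk_iff

lemma QuotientGroup.mk_le_mk {g h : G} (hgh : g ≤ h) : (g : G ⧸ H) ≤ h :=
  ⟨g, h, rfl, rfl, hgh⟩

variable [H.Normal]

instance : MulLeftMono (G ⧸ H) where
  elim x y z := QuotientGroup.induction_on x fun w => QuotientGroup.induction_on y fun g =>
    QuotientGroup.induction_on z fun h => by
      simp only [← QuotientGroup.mk_mul, QuotientGroup.mk_le_mk_iff]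
      rintro ⟨u, hu, hgh⟩
      exact ⟨u, hu, by simpa [mul_assoc] using mul_le_mul_right hgh w⟩

instance : MulRightMono (G ⧸ H) where
  elim x y z := QuotientGroup.induction_on x fun w => QuotientGroup.induction_on y fun g =>
    QuotientGroup.induction_on z fun h => by
      simp only [Function.swap, ← QuotientGroup.mk_mul, QuotientGroup.mk_le_mk_iff]
      rintro ⟨u, hu, hgh⟩
      refine ⟨w⁻¹ * u * w, by simpa using Subgroup.Normal.conj_mem ‹_› u hu w⁻¹, ?_⟩
      simpa [mul_assoc] using mul_le_mul_left hgh w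

end QuotientOrder

section Infinitesimals

variable {G : Type*} [Group G] [LinearOrder G] {f : G}

def infinitesimals (f : G) : Set G := {g | ∀ n : ℤ, g ^ n < f}

lemma inv_mem_infinitesimals {g : G} (hg : g ∈ infinitesimals f) : g⁻¹ ∈ infinitesimals f :=
  fun n => by simpa [inv_zpow'] using hg (-n)

lemma mul_self_mem_infinitesimals {g : G} (hg : g ∈ infinitesimals f) :
    g * g ∈ infinitesimals f := fun n => by
  rw [← sq, ← zpow_natCast, ← zpow_mul]
  exact hg _

lemma one_lt_of_forall_le_pow [MulLeftMono G] [Nontrivial G]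
    (hcof : ∀ g : G, ∃ k : ℕ, g ≤ f ^ k) : 1 < f := by
  by_contra! hf
  have hle : ∀ g : G, g ≤ 1 := fun g => by
    obtain ⟨k, hk⟩ := hcof g
    exact hk.trans (pow_le_one' hf k)
  obtain ⟨g, hg⟩ := exists_ne (1 : G)
  exact hg (le_antisymm (hle g) (one_le_of_inv_le_one (hle g⁻¹)))

variable [MulLeftMono G] [MulRightMono G]

lemma exists_le_pow_of_closure_eq_top {s : Set G} (hs : Subgroup.closure s = ⊤)
    (hsf : ∀ x ∈ s, x ≤ f ∧ x⁻¹ ≤ f) (g : G) : ∃ k : ℕ, g ≤ f ^ k := by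
  induction (hs ▸ Subgroup.mem_top g : g ∈ Subgroup.closure s)
    using Subgroup.closure_induction'' with
  | mem x hx => exact ⟨1, by simpa using (hsf x hx).1⟩
  | inv_mem x hx => exact ⟨1, by simpa using (hsf x hx).2⟩
  | one => exact ⟨0, by simp⟩
  | mul x y _ _ hx hy =>
    obtain ⟨k, hk⟩ := hx
    obtain ⟨l, hl⟩ := hy
    exact ⟨k + l, pow_add f k l ▸ mul_le_mul' hk hl⟩

lemma ordConnected_infinitesimals (f : G) : (infinitesimals f).OrdConnected := by
  refine ⟨fun a ha b hb x hx n => ?_⟩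
  obtain ⟨k, rfl | rfl⟩ := Int.eq_nat_or_neg n
  · simpa using (pow_le_pow_left' hx.2 k).trans_lt (by simpa using hb k)
  · have hinv : x⁻¹ ≤ a⁻¹ := inv_le_inv_iff.mpr hx.1
    simpa using (pow_le_pow_left' hinv k).trans_lt (by simpa using ha (-k))

lemma mul_mem_infinitesimals {a b : G} (ha : a ∈ infinitesimals f)
    (hb : b ∈ infinitesimals f) : a * b ∈ infinitesimals f := by
  set m := max (max a a⁻¹) (max b b⁻¹)
  have hm : m ∈ infinitesimals f :=
    max_rec' _ (max_rec' _ ha (inv_mem_infinitesimals ha))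
      (max_rec' _ hb (inv_mem_infinitesimals hb))
  have hmm := mul_self_mem_infinitesimals hm
  refine (ordConnected_infinitesimals f).out (inv_mem_infinitesimals hmm) hmm ⟨?_, ?_⟩
  · refine inv_le_of_inv_le' ?_
    rw [mul_inv_rev]
    exact mul_le_mul' (le_max_right _ _ |>.trans (le_max_right _ _))
      (le_max_right _ _ |>.trans (le_max_left _ _))
  · exact mul_le_mul' (le_max_left _ _ |>.trans (le_max_left _ _))
      (le_max_left _ _ |>.trans (le_max_right _ _))

def infinitesimalSubgroup (f : G) (hf : 1 < f) : Subgroup G where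
  carrier := infinitesimals f
  one_mem' n := by simpa using hf
  inv_mem' := inv_mem_infinitesimals
  mul_mem' := mul_mem_infinitesimals

instance (hf : 1 < f) : Fact ((infinitesimalSubgroup f hf : Set G).OrdConnected) :=
  ⟨ordConnected_infinitesimals f⟩

lemma exists_conj_le_pow (hcof : ∀ g : G, ∃ k : ℕ, g ≤ f ^ k) (h : G) :
    ∃ M : ℕ, h * f * h⁻¹ ≤ f ^ M := by
  obtain ⟨k, hk⟩ := hcof h
  obtain ⟨l, hl⟩ := hcof h⁻¹
  refine ⟨k + 1 + l, ?_⟩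
  rw [pow_add, pow_succ]
  exact mul_le_mul' (mul_le_mul' hk le_rfl) hl

lemma conj_mem_infinitesimals (hcof : ∀ g : G, ∃ k : ℕ, g ≤ f ^ k) {g : G}
    (hg : g ∈ infinitesimals f) (h : G) : h * g * h⁻¹ ∈ infinitesimals f := by
  intro n
  by_contra! hn
  rw [conj_zpow] at hn
  obtain ⟨M, hM⟩ := exists_conj_le_pow hcof h
  have hfM : f ≤ h⁻¹ * f ^ M * h := by
    simpa [mul_assoc] using mul_le_mul_left (mul_le_mul_right hM h⁻¹) h
  have hfg : h⁻¹ * f * h ≤ g ^ n := by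
    simpa [mul_assoc] using mul_le_mul_left (mul_le_mul_right hn h⁻¹) h
  have := calc f ≤ h⁻¹ * f ^ M * h := hfM
    _ = (h⁻¹ * f * h) ^ M := by simpa using (conj_pow (a := h⁻¹) (b := f) (i := M)).symm
    _ ≤ (g ^ n) ^ M := pow_le_pow_left' hfg M
    _ = g ^ (n * M) := by rw [zpow_mul, zpow_natCast]
    _ < f := hg _
  exact this.false

lemma infinitesimalSubgroup_normal (hf : 1 < f) (hcof : ∀ g : G, ∃ k : ℕ, g ≤ f ^ k) :
    (infinitesimalSubgroup f hf).Normal :=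
  ⟨fun _ hg h => conj_mem_infinitesimals hcof hg h⟩

lemma exists_le_pow_of_one_lt_mk (hf : 1 < f) (hcof : ∀ g : G, ∃ k : ℕ, g ≤ f ^ k)
    [(infinitesimalSubgroup f hf).Normal] (ξ : G ⧸ infinitesimalSubgroup f hf) (hξ : 1 < ξ)
    (η : G ⧸ infinitesimalSubgroup f hf) : ∃ n : ℕ, η ≤ ξ ^ n := by
  induction ξ using QuotientGroup.induction_on with | H s => ?_
  induction η using QuotientGroup.induction_on with | H t => ?_
  have hsH : ∀ u ∈ infinitesimalSubgroup f hf, u < s := by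
    simpa [← QuotientGroup.mk_one, QuotientGroup.mk_le_mk_iff] using hξ.not_ge
  have hs : 1 < s := hsH 1 (Subgroup.one_mem _)
  obtain ⟨n, hn⟩ : ∃ n : ℤ, f ≤ s ^ n := by
    by_contra! h
    exact (hsH s h).false
  obtain ⟨k, rfl⟩ : ∃ k : ℕ, n = k := Int.eq_ofNat_of_zero_le <| by
    by_contra! hn0
    exact (hn.trans ((zpow_strictMono_of_one_lt hs).monotone hn0.le)).not_gt (by simpa using hf)
  obtain ⟨K, hK⟩ := hcof t
  refine ⟨k * K, ?_⟩
  rw [← QuotientGroup.mk_pow, pow_mul]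
  exact QuotientGroup.mk_le_mk (hK.trans (pow_le_pow_left' (by simpa using hn) K))

theorem commutator_mem_infinitesimalSubgroup (hf : 1 < f) (hcof : ∀ g : G, ∃ k : ℕ, g ≤ f ^ k)
    (a b : G) : ⁅a, b⁆ ∈ infinitesimalSubgroup f hf := by
  have := infinitesimalSubgroup_normal hf hcof
  rw [← QuotientGroup.eq_one_iff, ← QuotientGroup.mk'_apply, map_commutatorElement,
    commutatorElement_eq_one_iff_mul_comm]
  exact mul_comm_of_archimedean (exists_le_pow_of_one_lt_mk hf hcof) _ _

end Infinitesimals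

section GermOrder

lemma exists_pos_lt_of_pos {δ : ℝ} (hδ : 0 < δ) :
    ∃ x : ↥unitI, 0 < (x : ℝ) ∧ (x : ℝ) < δ := by
  have hmin := lt_min hδ one_pos
  refine ⟨⟨min δ 1 / 2, by constructor <;> linarith [min_le_right δ 1]⟩, ?_, ?_⟩
  · show 0 < min δ 1 / 2
    linarith
  · show min δ 1 / 2 < δ
    linarith [min_le_left δ 1]

lemma ltNear_irrefl (g : IntervalMap) : ¬ ltNear g g := fun ⟨_, hδ, h⟩ =>
  let ⟨x, hx0, hxδ⟩ := exists_pos_lt_of_pos hδ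
  (h x hx0 hxδ).false

lemma ltNear.trans {a b c : IntervalMap} (hab : ltNear a b) (hbc : ltNear b c) : ltNear a c := by
  obtain ⟨δ, hδ, h⟩ := hab
  obtain ⟨ε, hε, h'⟩ := hbc
  exact ⟨min δ ε, lt_min hδ hε, fun x hx0 hx =>
    (h x hx0 (hx.trans_le (min_le_left _ _))).trans (h' x hx0 (hx.trans_le (min_le_right _ _)))⟩

namespace IsOPH

variable {σ : IntervalMap}

lemma strictMono (hσ : IsOPH σ) : StrictMono σ := fun _ _ h => hσ h

lemma inv (hσ : IsOPH σ) : IsOPH σ⁻¹ := fun a b h =>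
  hσ.strictMono.lt_iff_lt.mp (by simpa using h)

lemma continuous (hσ : IsOPH σ) : Continuous σ := by
  simpa using (hσ.strictMono.orderIsoOfSurjective σ σ.surjective).continuous

lemma pos (hσ : IsOPH σ) {x : ↥unitI} (hx : 0 < (x : ℝ)) : 0 < (σ x : ℝ) := by
  have h := hσ.strictMono (show (⊥ : ↥unitI) < x from hx)
  rwa [show σ ⊥ = ⊥ from (hσ.strictMono.orderIsoOfSurjective σ σ.surjective).map_bot] at h

lemma exists_fixed_mem_uIcc (hσ : IsOPH σ) {x y : ↥unitI}
    (h : (0 : ℝ) ∈ Set.uIcc ((σ x : ℝ) - x) ((σ y : ℝ) - y)) :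
    ∃ z ∈ Set.uIcc x y, σ z = z := by
  obtain ⟨z, hz, hz0⟩ := intermediate_value_uIcc
    ((continuous_subtype_val.comp hσ.continuous).sub continuous_subtype_val).continuousOn h
  exact ⟨z, hz, Subtype.ext (sub_eq_zero.mp hz0)⟩

lemma exists_pos_forall_ne_of_finite (hfin : (FixPts σ).Finite) :
    ∃ δ > 0, ∀ x : ↥unitI, 0 < (x : ℝ) → (x : ℝ) < δ → σ x ≠ x := by
  rcases (FixPts σ).eq_empty_or_nonempty with hemp | hne
  · exact ⟨1, one_pos, fun x hx0 hx1 hfix => hemp.subset ⟨hfix, hx0, hx1⟩⟩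
  · obtain ⟨p, hp, hmin⟩ := Set.exists_min_image _ (fun x : ↥unitI => (x : ℝ)) hfin hne
    exact ⟨p, hp.2.1, fun x hx0 hxp hfix =>
      (hmin x ⟨hfix, hx0, hxp.trans hp.2.2⟩).not_gt hxp⟩

/-- With no fixed point in `(0, δ)`, the intermediate value theorem forces `σ x - x` to have
a constant sign there. -/
lemma ltNear_or_ltNear (hσ : IsOPH σ) (hfin : (FixPts σ).Finite) :
    ltNear 1 σ ∨ ltNear σ 1 := by
  obtain ⟨δ, hδ, hne⟩ := exists_pos_forall_ne_of_finite hfin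
  obtain ⟨x₀, hx₀, hx₀δ⟩ := exists_pos_lt_of_pos hδ
  have hsign : ∀ x : ↥unitI, 0 < (x : ℝ) → (x : ℝ) < δ →
      ((σ x : ℝ) < x ↔ (σ x₀ : ℝ) < x₀) := by
    intro x hx hxδ
    by_contra hiff
    obtain ⟨z, hz, hfix⟩ := hσ.exists_fixed_mem_uIcc (x := x) (y := x₀) <| by
      rw [Set.mem_uIcc]
      rcases lt_or_ge (σ x : ℝ) x with hA | hA <;>
        rcases lt_or_ge (σ x₀ : ℝ) x₀ with hB | hB
      exacts [absurd (iff_of_true hA hB) hiff, Or.inl ⟨by linarith, by linarith⟩,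
        Or.inr ⟨by linarith, by linarith⟩, absurd (iff_of_false hA.not_gt hB.not_gt) hiff]
    rcases Set.mem_uIcc.mp hz with ⟨h1, h2⟩ | ⟨h1, h2⟩
    · exact hne z (hx.trans_le (Subtype.coe_le_coe.mpr h1))
        ((Subtype.coe_le_coe.mpr h2).trans_lt hx₀δ) hfix
    · exact hne z (hx₀.trans_le (Subtype.coe_le_coe.mpr h1))
        ((Subtype.coe_le_coe.mpr h2).trans_lt hxδ) hfix
  rcases lt_or_gt_of_ne fun h => hne x₀ hx₀ hx₀δ (Subtype.ext h) with h | h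
  · exact Or.inr ⟨δ, hδ, fun x hx hxδ => (hsign x hx hxδ).mpr h⟩
  · refine Or.inl ⟨δ, hδ, fun x hx hxδ => lt_of_le_of_ne ?_ fun e => ?_⟩
    · exact not_lt.mp fun hlt => h.not_gt ((hsign x hx hxδ).mp hlt)
    · exact hne x hx hxδ (Subtype.ext e.symm)

end IsOPH

lemma ltNear.mul_left {a b c : IntervalMap} (hc : IsOPH c) (h : ltNear a b) :
    ltNear (c * a) (c * b) :=
  let ⟨δ, hδ, h⟩ := h
  ⟨δ, hδ, fun x hx0 hx => hc (h x hx0 hx)⟩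

lemma ltNear.mul_right {a b c : IntervalMap} (hc : IsOPH c) (h : ltNear a b) :
    ltNear (a * c) (b * c) := by
  obtain ⟨δ, hδ, h⟩ := h
  obtain ⟨p, hp0, hpδ⟩ := exists_pos_lt_of_pos hδ
  refine ⟨c⁻¹ p, hc.inv.pos hp0, fun x hx0 hx => h (c x) (hc.pos hx0) ?_⟩
  have : c x < p := by simpa using hc.strictMono (show x < c⁻¹ p from hx)
  exact (Subtype.coe_lt_coe.mpr this).trans hpδ

lemma ltNear_trichotomous {Γ : Subgroup IntervalMap} (hΓ : HomeoSubgroup Γ) (hfix : FinFix Γ)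
    {a b : IntervalMap} (ha : a ∈ Γ) (hb : b ∈ Γ) : ltNear a b ∨ a = b ∨ ltNear b a := by
  by_cases hab : a = b
  · exact Or.inr (Or.inl hab)
  have hmem : b⁻¹ * a ∈ Γ := Γ.mul_mem (Γ.inv_mem hb) ha
  have hne : b⁻¹ * a ≠ 1 := by rwa [Ne, inv_mul_eq_one, eq_comm]
  rcases (hΓ _ hmem).ltNear_or_ltNear (hfix _ hmem hne) with h | h
  · exact Or.inr (Or.inr (by simpa using h.mul_left (hΓ b hb)))
  · exact Or.inl (by simpa using h.mul_left (hΓ b hb))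

variable (Γ : Subgroup IntervalMap) [hΓ : Fact (HomeoSubgroup Γ)] [hfix : Fact (FinFix Γ)]

instance : IsStrictTotalOrder ↥Γ fun a b => ltNear a b where
  trichotomous a b hab hba := by
    rcases ltNear_trichotomous hΓ.out hfix.out a.2 b.2 with h | h | h
    exacts [(hab h).elim, Subtype.ext h, (hba h).elim]
  irrefl a := ltNear_irrefl a
  trans _ _ _ := ltNear.trans

instance : LinearOrder ↥Γ :=
  @linearOrderOfSTO _ (fun a b : ↥Γ => ltNear a b) _ (Classical.decRel _)

variable {Γ}

lemma le_iff_leNear {a b : ↥Γ} : a ≤ b ↔ leNear a b :=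
  (or_comm.trans (or_congr Iff.rfl Subtype.ext_iff))

instance : MulLeftMono ↥Γ :=
  ⟨fun c _ _ h => h.imp (congrArg (c * ·)) (ltNear.mul_left (hΓ.out c c.2))⟩

instance : MulRightMono ↥Γ :=
  ⟨fun c _ _ h => h.imp (congrArg (· * c)) (ltNear.mul_right (hΓ.out c c.2))⟩

end GermOrder

theorem stmt11_general (Γ : Subgroup IntervalMap) (hΓhomeo : HomeoSubgroup Γ)
    (hΓfix : FinFix Γ) (hΓnt : Γ ≠ ⊥)
    (S : Finset IntervalMap)
    (hSsym : ∀ s ∈ S, s⁻¹ ∈ S)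
    (hSgen : Subgroup.closure (S : Set IntervalMap) = Γ)
    (f : IntervalMap) (hfS : f ∈ S) (hfbig : ∀ ξ ∈ S, leNear ξ f) :
    ∃ H : Subgroup ↥Γ,
      (H : Set ↥Γ) = {γ : ↥Γ | Infinitesimal (γ : IntervalMap) f} ∧
      H.Normal ∧ (∀ a b : ↥Γ, ⁅a, b⁆ ∈ H) ∧ commutator ↥Γ ≤ H := by
  subst hSgen
  have : Fact (HomeoSubgroup _) := ⟨hΓhomeo⟩
  have : Fact (FinFix _) := ⟨hΓfix⟩
  have : Nontrivial _ := (Subgroup.nontrivial_iff_ne_bot _).mpr hΓnt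
  set f' : ↥(Subgroup.closure (S : Set IntervalMap)) := ⟨f, Subgroup.subset_closure hfS⟩
  have hcof : ∀ g, ∃ k : ℕ, g ≤ f' ^ k :=
    exists_le_pow_of_closure_eq_top Subgroup.closure_closure_coe_preimage fun x hx =>
      ⟨le_iff_leNear.mpr (hfbig _ hx), le_iff_leNear.mpr (hfbig _ (hSsym _ hx))⟩
  have hf := one_lt_of_forall_le_pow hcof
  refine ⟨infinitesimalSubgroup f' hf, ?_, infinitesimalSubgroup_normal hf hcof,
    commutator_mem_infinitesimalSubgroup hf hcof, ?_⟩
  · ext γ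
    simp only [SetLike.mem_coe, Set.mem_ofPred_eq, Infinitesimal, ← Subgroup.coe_zpow]
    rfl
  · rw [commutator_def, Subgroup.commutator_le]
    exact fun a _ b _ => commutator_mem_infinitesimalSubgroup hf hcof a b

theorem stmt11 (Γ : Subgroup IntervalMap) (hΓhomeo : HomeoSubgroup Γ)
    (hΓfix : FinFix Γ) (hΓnt : Γ ≠ ⊥)
    (S : Finset IntervalMap) (hSsub : (S : Set IntervalMap) ⊆ Γ)
    (hSsym : ∀ s ∈ S, s⁻¹ ∈ S)
    (hSgen : Subgroup.closure (S : Set IntervalMap) = Γ)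
    (f : IntervalMap) (hfS : f ∈ S) (hfbig : ∀ ξ ∈ S, leNear ξ f) :
    ∃ H : Subgroup ↥Γ,
      (H : Set ↥Γ) = {γ : ↥Γ | Infinitesimal (γ : IntervalMap) f} ∧
      H.Normal ∧ (∀ a b : ↥Γ, ⁅a, b⁆ ∈ H) ∧ commutator ↥Γ ≤ H :=
  stmt11_general Γ hΓhomeo hΓfix hΓnt S hSsym hSgen f hfS hfbig

end
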